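/- Let n ≥ 1. The game n·(*2) + * (the disjunctive sum of n copies of the Nim-heap *2 together with one copy of *) is a misère N-position, i.e. it is not a misère P-position. -/

import Mathlib

universe u

/-! `SetTheory.PGame` and the games `nim`, `star` have been removed from Mathlib; they are
reproduced here with their former (Mathlib, December 2024) definitions. -/

/-- Pre-games (as formerly in Mathlib's `SetTheory.PGame`). -/
inductive SetTheory.PGame : Type (u + 1)
  | mk : ∀ α β : Type u, (α → SetTheory.PGame) → (β → SetTheory.PGame) → SetTheory.PGame

namespace SetTheory.PGame

/-- The pre-game `0` with no moves. -/
instance : Zero PGame.{u} :=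
  ⟨⟨PEmpty, PEmpty, PEmpty.elim, PEmpty.elim⟩⟩

/-- The disjunctive sum of pre-games. -/
noncomputable instance : Add PGame.{u} :=
  ⟨fun x y => by
    induction x generalizing y with | mk xl xr _ _ IHxl IHxr => _
    induction y with | mk yl yr yL yR IHyl IHyr => _
    have y := mk yl yr yL yR
    refine ⟨xl ⊕ yl, xr ⊕ yr, Sum.rec ?_ ?_, Sum.rec ?_ ?_⟩
    · exact fun i => IHxl i y
    · exact fun i => IHyl i
    · exact fun i => IHxr i y
    · exact fun i => IHyr i⟩

/-- The pre-game `star`, whose only options are `0`. -/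
def star : PGame.{u} :=
  ⟨PUnit, PUnit, fun _ => 0, fun _ => 0⟩

/-- The nim game of an ordinal `o`: both players may move to `nim a` for any `a < o`. -/
noncomputable def nim (o : Ordinal.{u}) : PGame.{u} :=
  ⟨o.ToType, o.ToType,
    fun x => nim (Ordinal.typein (α := o.ToType) (· < ·) x),
    fun x => nim (Ordinal.typein (α := o.ToType) (· < ·) x)⟩
termination_by o
decreasing_by all_goals exact Ordinal.typein_lt_self x

end SetTheory.PGame

open SetTheory PGame

/-- `G` is a misère P-position: `G` has at least one option and every option of `G` is a
misère N-position (i.e. not a misère P-position).  In particular the empty game `0` is a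
misère N-position.  (For an impartial game the options are the left moves.) -/
def MisereP : PGame → Prop
  | PGame.mk l _ L _ => Nonempty l ∧ ∀ i, ¬ MisereP (L i)

/-- `copies n G` is the disjunctive sum `n · G` of `n` copies of `G`. -/
noncomputable def copies : ℕ → PGame → PGame
  | 0, _ => 0
  | n + 1, G => copies n G + G

/-!
Write `S(a, b)` for `a·(*2) + b·*`. Its options are `S(a-1, b)` and `S(a-1, b+1)` (a `*2` moved
to `0` or to `*`) and `S(a, b-1)`, up to relabelling. Induction on `2a + b` along these moves
shows that `S(a, b)` is a misère P-position exactly when `a = 0` and `b` is odd, or `a ≠ 0` and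
`a`, `b` are both even: this is Bouton's misère rule for heaps of size at most `2`. The game
`n·(*2) + *` is `S(n, 1)`, and `1` is odd while `n ≠ 0`.
-/

namespace SetTheory.PGame

def LeftMoves : PGame.{u} → Type u
  | mk l _ _ _ => l

def RightMoves : PGame.{u} → Type u
  | mk _ r _ _ => r

def moveLeft : ∀ g : PGame.{u}, LeftMoves g → PGame.{u}
  | mk _ _ L _ => L

def moveRight : ∀ g : PGame.{u}, RightMoves g → PGame.{u}
  | mk _ _ _ R => R

inductive Relabelling : PGame.{u} → PGame.{u} → Type (u + 1)
  | mk : ∀ {x y : PGame} (L : x.LeftMoves ≃ y.LeftMoves) (R : x.RightMoves ≃ y.RightMoves),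
      (∀ i, Relabelling (x.moveLeft i) (y.moveLeft (L i))) →
        (∀ j, Relabelling (x.moveRight j) (y.moveRight (R j))) → Relabelling x y

infixl:50 " ≡r " => SetTheory.PGame.Relabelling

instance isEmpty_zero_leftMoves : IsEmpty (LeftMoves 0) := ⟨fun x : PEmpty => x.elim⟩

theorem leftMoves_add : ∀ x y : PGame.{u}, (x + y).LeftMoves = (x.LeftMoves ⊕ y.LeftMoves)
  | ⟨_, _, _, _⟩, ⟨_, _, _, _⟩ => rfl

def toLeftMovesAdd {x y : PGame} : x.LeftMoves ⊕ y.LeftMoves ≃ (x + y).LeftMoves :=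
  Equiv.cast (leftMoves_add x y).symm

theorem add_moveLeft_inl {x : PGame} (y : PGame) (i) :
    (x + y).moveLeft (toLeftMovesAdd (Sum.inl i)) = x.moveLeft i + y := by
  cases x; cases y; rfl

theorem add_moveLeft_inr (x : PGame) {y : PGame} (i) :
    (x + y).moveLeft (toLeftMovesAdd (Sum.inr i)) = x + y.moveLeft i := by
  cases x; cases y; rfl

theorem leftMoves_add_cases {x y : PGame} {P : (x + y).LeftMoves → Prop}
    (hl : ∀ i, P <| toLeftMovesAdd (Sum.inl i)) (hr : ∀ i, P <| toLeftMovesAdd (Sum.inr i)) (k) :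
    P k := by
  rw [← toLeftMovesAdd.apply_symm_apply k]
  rcases toLeftMovesAdd.symm k with i | i
  · exact hl i
  · exact hr i

namespace Relabelling

noncomputable def refl : ∀ x : PGame.{u}, x ≡r x
  | PGame.mk _ _ L R => ⟨Equiv.refl _, Equiv.refl _, fun i => refl (L i), fun j => refl (R j)⟩

noncomputable def mk' {x y : PGame} (L : y.LeftMoves ≃ x.LeftMoves)
    (R : y.RightMoves ≃ x.RightMoves) (hL : ∀ i, x.moveLeft (L i) ≡r y.moveLeft i)
    (hR : ∀ j, x.moveRight (R j) ≡r y.moveRight j) : x ≡r y :=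
  ⟨L.symm, R.symm, fun i => by have h := hL (L.symm i); rwa [L.apply_symm_apply] at h,
    fun j => by have h := hR (R.symm j); rwa [R.apply_symm_apply] at h⟩

noncomputable def symm {x y : PGame.{u}} (r : x ≡r y) : y ≡r x := by
  induction r with
  | mk L R _ _ ihL ihR => exact mk' L R ihL ihR

noncomputable def trans {x y z : PGame.{u}} (r₁ : x ≡r y) (r₂ : y ≡r z) : x ≡r z := by
  induction r₁ generalizing z with
  | mk L₁ R₁ _ _ ih₁ ih₂ =>
    cases r₂ with
    | mk L₂ R₂ hL₂ hR₂ =>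
      exact ⟨L₁.trans L₂, R₁.trans R₂, fun i => ih₁ i (hL₂ _), fun j => ih₂ j (hR₂ _)⟩

noncomputable def addCongr {w x y z : PGame.{u}} (h₁ : w ≡r x) (h₂ : y ≡r z) :
    w + y ≡r x + z := by
  induction w generalizing x y z with
  | mk wl wr wL wR ihwL ihwR =>
  induction y generalizing x z with
  | mk yl yr yL yR ihyL ihyR =>
  cases x
  cases z
  cases h₁ with
  | mk L₁ R₁ hL₁ hR₁ =>
  cases h₂ with
  | mk L₂ R₂ hL₂ hR₂ =>
  refine ⟨Equiv.sumCongr L₁ L₂, Equiv.sumCongr R₁ R₂, ?_, ?_⟩ <;> rintro (i | j)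
  · exact ihwL i (hL₁ i) ⟨L₂, R₂, hL₂, hR₂⟩
  · exact ihyL j ⟨L₁, R₁, hL₁, hR₁⟩ (hL₂ j)
  · exact ihwR i (hR₁ i) ⟨L₂, R₂, hL₂, hR₂⟩
  · exact ihyR j ⟨L₁, R₁, hL₁, hR₁⟩ (hR₂ j)

end Relabelling

noncomputable def addZeroRelabelling (x : PGame.{u}) : x + 0 ≡r x := by
  induction x with
  | mk xl xr xL xR ihL ihR =>
    refine ⟨Equiv.sumEmpty xl PEmpty, Equiv.sumEmpty xr PEmpty, ?_, ?_⟩ <;> rintro (i | ⟨⟨⟩⟩)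
    · exact ihL i
    · exact ihR i

noncomputable def zeroAddRelabelling (x : PGame.{u}) : 0 + x ≡r x := by
  induction x with
  | mk xl xr xL xR ihL ihR =>
    refine ⟨Equiv.emptySum PEmpty xl, Equiv.emptySum PEmpty xr, ?_, ?_⟩ <;> rintro (⟨⟨⟩⟩ | i)
    · exact ihL i
    · exact ihR i

noncomputable def addCommRelabelling (x y : PGame.{u}) : x + y ≡r y + x := by
  induction x generalizing y with
  | mk xl xr xL xR ihxL ihxR =>
  induction y with
  | mk yl yr yL yR ihyL ihyR =>
  refine ⟨Equiv.sumComm _ _, Equiv.sumComm _ _, ?_, ?_⟩ <;> rintro (i | j)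
  · exact ihxL i _
  · exact ihyL j
  · exact ihxR i _
  · exact ihyR j

noncomputable def addAssocRelabelling (x y z : PGame.{u}) : x + y + z ≡r x + (y + z) := by
  induction x generalizing y z with
  | mk xl xr xL xR ihxL ihxR =>
  induction y generalizing z with
  | mk yl yr yL yR ihyL ihyR =>
  induction z with
  | mk zl zr zL zR ihzL ihzR =>
  refine ⟨Equiv.sumAssoc _ _ _, Equiv.sumAssoc _ _ _, ?_, ?_⟩ <;> rintro ((i | i) | i)
  · exact ihxL i _ _
  · exact ihyL i _
  · exact ihzL i
  · exact ihxR i _ _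
  · exact ihyR i _
  · exact ihzR i

noncomputable def addRightCommRelabelling (x y z : PGame.{u}) : x + y + z ≡r x + (z + y) :=
  (addAssocRelabelling x y z).trans ((Relabelling.refl x).addCongr (addCommRelabelling y z))

def HasLeftOption (x y : PGame.{u}) : Prop :=
  ∃ i, Nonempty (x.moveLeft i ≡r y)

theorem HasLeftOption.trans_relabelling {x y z : PGame.{u}} (h : HasLeftOption x y)
    (r : y ≡r z) : HasLeftOption x z :=
  let ⟨i, ⟨s⟩⟩ := h
  ⟨i, ⟨s.trans r⟩⟩

theorem HasLeftOption.add_right {x x' : PGame.{u}} (h : HasLeftOption x x') (y : PGame.{u}) :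
    HasLeftOption (x + y) (x' + y) :=
  let ⟨i, ⟨s⟩⟩ := h
  ⟨toLeftMovesAdd (Sum.inl i), ⟨by rw [add_moveLeft_inl]; exact s.addCongr (.refl y)⟩⟩

theorem HasLeftOption.add_left {y y' : PGame.{u}} (h : HasLeftOption y y') (x : PGame.{u}) :
    HasLeftOption (x + y) (x + y') :=
  let ⟨i, ⟨s⟩⟩ := h
  ⟨toLeftMovesAdd (Sum.inr i), ⟨by rw [add_moveLeft_inr]; exact (Relabelling.refl x).addCongr s⟩⟩

theorem nim_def (o : Ordinal.{u}) :
    nim o = ⟨o.ToType, o.ToType, fun x => nim (Ordinal.typein (α := o.ToType) (· < ·) x),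
      fun x => nim (Ordinal.typein (α := o.ToType) (· < ·) x)⟩ := by
  rw [nim]

theorem exists_moveLeft_nim_eq {o : Ordinal.{u}} :
    ∀ i : (nim o).LeftMoves, ∃ a < o, (nim o).moveLeft i = nim a := by
  rw [nim_def]
  exact fun i => ⟨_, Ordinal.typein_lt_self i, rfl⟩

theorem hasLeftOption_nim {a o : Ordinal.{u}} (h : a < o) : HasLeftOption (nim o) (nim a) := by
  rw [HasLeftOption, nim_def]
  refine ⟨Ordinal.ToType.mk ⟨a, h⟩, ⟨?_⟩⟩
  have h_typein : Ordinal.typein (α := o.ToType) (· < ·) (Ordinal.ToType.mk ⟨a, h⟩) = a :=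
    congrArg Subtype.val (Ordinal.ToType.mk.symm_apply_apply ⟨a, h⟩)
  show nim _ ≡r nim a
  rw [h_typein]
  exact .refl _

noncomputable def nimZeroRelabelling : nim 0 ≡r 0 := by
  rw [nim_def]
  exact ⟨Equiv.equivOfIsEmpty (Ordinal.ToType 0) PEmpty,
    Equiv.equivOfIsEmpty (Ordinal.ToType 0) PEmpty, fun (i : Ordinal.ToType 0) => isEmptyElim i,
    fun (i : Ordinal.ToType 0) => isEmptyElim i⟩

noncomputable def nimOneRelabelling : nim 1 ≡r star := by
  rw [nim_def]
  refine ⟨Equiv.ofUnique (Ordinal.ToType 1) PUnit, Equiv.ofUnique (Ordinal.ToType 1) PUnit,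
    fun (i : Ordinal.ToType 1) => ?_, fun (i : Ordinal.ToType 1) => ?_⟩ <;>
  · show nim _ ≡r 0
    rw [Order.lt_one_iff.1 (Ordinal.typein_lt_self i)]
    exact nimZeroRelabelling

theorem misereP_iff (x : PGame) :
    MisereP x ↔ Nonempty x.LeftMoves ∧ ∀ i, ¬ MisereP (x.moveLeft i) := by
  cases x
  rw [MisereP]
  rfl

theorem misereP_congr {x y : PGame} (r : x ≡r y) : MisereP x ↔ MisereP y := by
  induction r with
  | mk L _ _ _ ihL _ =>
    rw [misereP_iff, misereP_iff, L.nonempty_congr, ← L.forall_congr_right]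
    exact and_congr Iff.rfl (forall_congr' fun i => not_congr (ihL i))

theorem misereP_iff_of_leftOptions {x : PGame} {O : PGame → Prop}
    (hx : ∀ i, ∃ y, O y ∧ Nonempty (x.moveLeft i ≡r y)) (hO : ∀ y, O y → HasLeftOption x y) :
    MisereP x ↔ (∃ y, O y) ∧ ∀ y, O y → ¬ MisereP y := by
  rw [misereP_iff]
  constructor
  · rintro ⟨⟨i⟩, h⟩
    obtain ⟨y, hy, -⟩ := hx i
    refine ⟨⟨y, hy⟩, fun z hz hP => ?_⟩
    obtain ⟨j, ⟨r⟩⟩ := hO z hz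
    exact h j ((misereP_congr r).2 hP)
  · rintro ⟨⟨y, hy⟩, h⟩
    refine ⟨⟨(hO y hy).choose⟩, fun i hP => ?_⟩
    obtain ⟨z, hz, ⟨r⟩⟩ := hx i
    exact h z hz ((misereP_congr r).1 hP)

theorem copies_succ_moveLeft (X : PGame) (n : ℕ) (i : (copies (n + 1) X).LeftMoves) :
    ∃ j, Nonempty ((copies (n + 1) X).moveLeft i ≡r copies n X + X.moveLeft j) := by
  change (copies n X + X).LeftMoves at i
  change ∃ j, Nonempty ((copies n X + X).moveLeft i ≡r _)
  cases i using leftMoves_add_cases with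
  | hr j => exact ⟨j, ⟨by rw [add_moveLeft_inr]; exact .refl _⟩⟩
  | hl i =>
  cases n with
  | zero => exact isEmptyElim (α := (0 : PGame).LeftMoves) i
  | succ n =>
    obtain ⟨j, ⟨r⟩⟩ := copies_succ_moveLeft X n i
    refine ⟨j, ⟨?_⟩⟩
    rw [add_moveLeft_inl]
    exact (r.addCongr (.refl X)).trans
      ((addRightCommRelabelling _ _ _).trans (addAssocRelabelling _ _ _).symm)

theorem HasLeftOption.copies_succ {X X' : PGame} (h : HasLeftOption X X') (n : ℕ) :
    HasLeftOption (copies (n + 1) X) (copies n X + X') :=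
  h.add_left (copies n X)

theorem nim_two_moveLeft (i : (nim (2 : Ordinal.{0})).LeftMoves) :
    Nonempty ((nim 2).moveLeft i ≡r 0) ∨ Nonempty ((nim 2).moveLeft i ≡r star) := by
  obtain ⟨a, ha, he⟩ := exists_moveLeft_nim_eq i
  rw [he]
  rcases Order.le_one_iff.1 (Order.lt_two_iff.1 ha) with rfl | rfl
  · exact .inl ⟨nimZeroRelabelling⟩
  · exact .inr ⟨nimOneRelabelling⟩

theorem nim_two_hasLeftOption_zero : HasLeftOption (nim (2 : Ordinal.{0})) 0 :=
  (hasLeftOption_nim (Order.lt_two_iff.2 zero_le_one)).trans_relabelling nimZeroRelabelling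

theorem nim_two_hasLeftOption_star : HasLeftOption (nim (2 : Ordinal.{0})) star :=
  (hasLeftOption_nim (Order.lt_two_iff.2 le_rfl)).trans_relabelling nimOneRelabelling

theorem star_hasLeftOption_zero : HasLeftOption star 0 :=
  ⟨PUnit.unit, ⟨.refl 0⟩⟩

noncomputable abbrev nimTwoStarSum (a b : ℕ) : PGame :=
  copies a (nim (2 : Ordinal.{0})) + copies b star

def IsNimTwoStarSumOption (a b : ℕ) (y : PGame) : Prop :=
  (a ≠ 0 ∧ (y = nimTwoStarSum (a - 1) b ∨ y = nimTwoStarSum (a - 1) (b + 1))) ∨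
    (b ≠ 0 ∧ y = nimTwoStarSum a (b - 1))

theorem nimTwoStarSum_moveLeft (a b : ℕ) (i : (nimTwoStarSum a b).LeftMoves) :
    ∃ y, IsNimTwoStarSumOption a b y ∧ Nonempty ((nimTwoStarSum a b).moveLeft i ≡r y) := by
  cases i using leftMoves_add_cases with
  | hl i =>
    cases a with
    | zero => exact isEmptyElim (α := (0 : PGame).LeftMoves) i
    | succ a =>
      obtain ⟨j, ⟨r⟩⟩ := copies_succ_moveLeft _ a i
      rw [add_moveLeft_inl]
      rcases nim_two_moveLeft j with ⟨⟨s⟩⟩ | ⟨⟨s⟩⟩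
      · exact ⟨_, .inl ⟨a.succ_ne_zero, .inl rfl⟩,
          ⟨(r.trans (((Relabelling.refl _).addCongr s).trans (addZeroRelabelling _))).addCongr
            (.refl _)⟩⟩
      · exact ⟨_, .inl ⟨a.succ_ne_zero, .inr rfl⟩,
          ⟨((r.trans ((Relabelling.refl _).addCongr s)).addCongr (.refl _)).trans
            (addRightCommRelabelling _ _ _)⟩⟩
  | hr i =>
    cases b with
    | zero => exact isEmptyElim (α := (0 : PGame).LeftMoves) i
    | succ b =>
      obtain ⟨j, ⟨r⟩⟩ := copies_succ_moveLeft _ b i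
      rw [add_moveLeft_inr]
      exact ⟨_, .inr ⟨b.succ_ne_zero, rfl⟩,
        ⟨(Relabelling.refl _).addCongr (r.trans (addZeroRelabelling _))⟩⟩

theorem nimTwoStarSum_hasLeftOption {a b : ℕ} {y : PGame} (hy : IsNimTwoStarSumOption a b y) :
    HasLeftOption (nimTwoStarSum a b) y := by
  rcases hy with ⟨ha, rfl | rfl⟩ | ⟨hb, rfl⟩
  · obtain ⟨a, rfl⟩ := Nat.exists_eq_add_one_of_ne_zero ha
    exact ((nim_two_hasLeftOption_zero.copies_succ a).add_right _).trans_relabelling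
      ((addZeroRelabelling _).addCongr (.refl _))
  · obtain ⟨a, rfl⟩ := Nat.exists_eq_add_one_of_ne_zero ha
    exact ((nim_two_hasLeftOption_star.copies_succ a).add_right _).trans_relabelling
      (addRightCommRelabelling _ _ _)
  · obtain ⟨b, rfl⟩ := Nat.exists_eq_add_one_of_ne_zero hb
    exact ((star_hasLeftOption_zero.copies_succ b).add_left _).trans_relabelling
      ((Relabelling.refl _).addCongr (addZeroRelabelling _))

theorem misereP_nimTwoStarSum_iff_options (a b : ℕ) :
    MisereP (nimTwoStarSum a b) ↔ (a ≠ 0 ∨ b ≠ 0) ∧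
      (a ≠ 0 → ¬ MisereP (nimTwoStarSum (a - 1) b) ∧ ¬ MisereP (nimTwoStarSum (a - 1) (b + 1))) ∧
      (b ≠ 0 → ¬ MisereP (nimTwoStarSum a (b - 1))) := by
  rw [misereP_iff_of_leftOptions (nimTwoStarSum_moveLeft a b)
    (fun _ => nimTwoStarSum_hasLeftOption)]
  simp [IsNimTwoStarSumOption, or_imp, forall_and, exists_or]

def IsNimTwoStarSumMisereP (a b : ℕ) : Prop :=
  (a = 0 ∧ b % 2 = 1) ∨ (a ≠ 0 ∧ a % 2 = 0 ∧ b % 2 = 0)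

theorem isNimTwoStarSumMisereP_iff_options (a b : ℕ) :
    IsNimTwoStarSumMisereP a b ↔ (a ≠ 0 ∨ b ≠ 0) ∧
      (a ≠ 0 → ¬ IsNimTwoStarSumMisereP (a - 1) b ∧ ¬ IsNimTwoStarSumMisereP (a - 1) (b + 1)) ∧
      (b ≠ 0 → ¬ IsNimTwoStarSumMisereP a (b - 1)) := by
  unfold IsNimTwoStarSumMisereP
  omega

theorem misereP_nimTwoStarSum_iff (a b : ℕ) :
    MisereP (nimTwoStarSum a b) ↔ IsNimTwoStarSumMisereP a b := by
  have h₁ (_ : a ≠ 0) := misereP_nimTwoStarSum_iff (a - 1) b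
  have h₂ (_ : a ≠ 0) := misereP_nimTwoStarSum_iff (a - 1) (b + 1)
  have h₃ (_ : b ≠ 0) := misereP_nimTwoStarSum_iff a (b - 1)
  rw [misereP_nimTwoStarSum_iff_options, isNimTwoStarSumMisereP_iff_options]
  refine and_congr .rfl (and_congr (imp_congr_right fun ha => ?_) (imp_congr_right fun hb => ?_))
  · rw [h₁ ha, h₂ ha]
  · rw [h₃ hb]
termination_by 2 * a + b
decreasing_by all_goals omega

end SetTheory.PGame

/-- For `n ≥ 1`, the game `n·(*2) + *` (the sum of `n` copies of the Nim-heap `*2`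
together with one copy of `*`, the game whose only option is `0`) is a misère
N-position, i.e. not a misère P-position. -/
theorem copies_star2_add_star_misere_N (n : ℕ) (hn : 1 ≤ n) :
    ¬ MisereP (copies n (nim (2 : Ordinal.{0})) + star) := by
  rw [← misereP_congr ((Relabelling.refl _).addCongr (zeroAddRelabelling star) :
    nimTwoStarSum n 1 ≡r _), misereP_nimTwoStarSum_iff, IsNimTwoStarSumMisereP]
  omega
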